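/- arXiv:2212.08373 — 8 statements merged into one kernel-verified Lean document; each statement's English description precedes it below -/
import Mathlib

section
/- A finite set system (X, F) is well-graded if and only if for every A, B ∈ F with |A △ B| ≥ 2 there exists C ∈ F with C ≠ A, C ≠ B, and A ∩ B ⊆ C ⊆ A ∪ B (equivalently C △ A ⊊ A △ B and C △ B ⊊ A △ B). -/
/-- The one-inclusion graph of a set system. -/
def oneInclusion {α : Type*} [DecidableEq α] (F : Finset (Finset α)) :
    SimpleGraph {A : Finset α // A ∈ F} where
  Adj A B := (symmDiff A.1 B.1).card = 1
  symm := by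
    constructor
    intro A B h
    rwa [symmDiff_comm] at h
  loopless := by
    constructor
    intro A h
    simp [symmDiff_self] at h

/-- A set system is well-graded if the Hamming distance between any two members
equals their distance in the one-inclusion graph. -/
def WellGraded {α : Type*} [DecidableEq α] (F : Finset (Finset α)) : Prop :=
  ∀ A B : {A : Finset α // A ∈ F},
    (oneInclusion F).dist A B = (symmDiff A.1 B.1).card

/-!
Each edge of the one-inclusion graph changes one element, so the Hamming distance `|A △ B|` is a
lower bound for the graph distance. If `F` is well-graded, the first step `C` of a shortest walk
from `A` to `B` satisfies `|A △ C| + |C △ B| = |A △ B|`, which says exactly that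
`A ∩ B ⊆ C ⊆ A ∪ B`. Conversely, such a `C` splits `A △ B` into the nonempty parts `A △ C` and
`C △ B`, and induction on `|A △ B|` yields a walk of length `|A △ B|`.
-/

open Finset
open scoped symmDiff

section Hamming

variable {α : Type*} [DecidableEq α] {A B C : Finset α}

lemma card_symmDiff_eq_zero : #(A ∆ B) = 0 ↔ A = B := by
  rw [card_eq_zero, ← bot_eq_empty, symmDiff_eq_bot]

lemma card_symmDiff_le_add (A B C : Finset α) : #(A ∆ B) ≤ #(A ∆ C) + #(C ∆ B) :=
  (card_le_card (symmDiff_triangle A C B)).trans (card_union_le _ _)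

lemma disjoint_symmDiff_symmDiff_iff :
    Disjoint (A ∆ C) (C ∆ B) ↔ A ∩ B ⊆ C ∧ C ⊆ A ∪ B := by
  simp only [Finset.disjoint_left, subset_iff, mem_symmDiff, mem_inter, mem_union]
  grind

/-- Since `(A ∆ C) ∆ (C ∆ B) = A ∆ B`, the sum exceeds `#(A ∆ B)` by twice the overlap. -/
lemma card_symmDiff_add_card_symmDiff_eq_iff :
    #(A ∆ C) + #(C ∆ B) = #(A ∆ B) ↔ Disjoint (A ∆ C) (C ∆ B) := by
  have hcancel : (A ∆ C) ∆ (C ∆ B) = A ∆ B := by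
    rw [← symmDiff_assoc, symmDiff_symmDiff_cancel_right]
  have hcard : #(A ∆ B) + #((A ∆ C) ∩ (C ∆ B)) + #((A ∆ C) ∩ (C ∆ B)) =
      #(A ∆ C) + #(C ∆ B) := by
    rw [← hcancel, symmDiff_eq_sup_sdiff_inf, sup_eq_union, inf_eq_inter,
      card_sdiff_of_subset inter_subset_union, ← card_union_add_card_inter]
    have := card_le_card (inter_subset_union (s := A ∆ C) (t := C ∆ B))
    omega
  rw [disjoint_iff_inter_eq_empty, ← card_eq_zero]
  omega

end Hamming

section OneInclusion

open SimpleGraph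

variable {α : Type*} [DecidableEq α] {F : Finset (Finset α)}

lemma card_symmDiff_le_length {A B : {A // A ∈ F}} (p : (oneInclusion F).Walk A B) :
    #(A.1 ∆ B.1) ≤ p.length := by
  induction p with
  | nil => simp
  | @cons A C B hadj _ ih =>
    have hstep : #(A.1 ∆ C.1) = 1 := hadj
    have := card_symmDiff_le_add A.1 B.1 C.1
    rw [Walk.length_cons]
    omega

lemma wellGraded_iff_exists_walk :
    WellGraded F ↔ ∀ A B, ∃ p : (oneInclusion F).Walk A B, p.length ≤ #(A.1 ∆ B.1) := by
  constructor
  · intro h A B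
    obtain rfl | hAB := eq_or_ne A B
    · exact ⟨.nil, by simp⟩
    have hdist : (oneInclusion F).dist A B ≠ 0 := by
      rw [h, Ne, card_symmDiff_eq_zero]
      exact Subtype.coe_ne_coe.2 hAB
    obtain ⟨p, hp⟩ := exists_walk_of_dist_ne_zero hdist
    exact ⟨p, (hp.trans (h A B)).le⟩
  · intro h A B
    obtain ⟨p, hp⟩ := h A B
    obtain ⟨q, hq⟩ := Reachable.exists_walk_length_eq_dist ⟨p⟩
    exact le_antisymm ((dist_le p).trans hp) (hq ▸ card_symmDiff_le_length q)

lemma WellGraded.exists_adj_card_symmDiff_add_eq (h : WellGraded F) {A B : {A // A ∈ F}}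
    (hAB : A ≠ B) :
    ∃ C, (oneInclusion F).Adj A C ∧ #(A.1 ∆ C.1) + #(C.1 ∆ B.1) = #(A.1 ∆ B.1) := by
  obtain ⟨p, hp⟩ := wellGraded_iff_exists_walk.1 h A B
  obtain ⟨C, hadj, q, rfl⟩ := Walk.exists_eq_cons_of_ne hAB p
  have hstep : #(A.1 ∆ C.1) = 1 := hadj
  have hq := card_symmDiff_le_length q
  have := card_symmDiff_le_add A.1 B.1 C.1
  rw [Walk.length_cons] at hp
  exact ⟨C, hadj, by omega⟩

lemma exists_walk_length_le_card_symmDiff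
    (H : ∀ A ∈ F, ∀ B ∈ F, 2 ≤ #(A ∆ B) → ∃ C ∈ F, C ≠ A ∧ C ≠ B ∧ A ∩ B ⊆ C ∧ C ⊆ A ∪ B)
    (A B : {A // A ∈ F}) : ∃ p : (oneInclusion F).Walk A B, p.length ≤ #(A.1 ∆ B.1) := by
  induction hn : #(A.1 ∆ B.1) using Nat.strong_induction_on generalizing A B with
  | _ n ih =>
  obtain hn0 | rfl | hn2 : n = 0 ∨ n = 1 ∨ 2 ≤ n := by omega
  · obtain rfl : A = B := Subtype.ext (card_symmDiff_eq_zero.1 (hn.trans hn0))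
    exact ⟨.nil, by simp⟩
  · exact ⟨.cons (hn : (oneInclusion F).Adj A B) .nil, le_rfl⟩
  obtain ⟨C, hC, hCA, hCB, hbetween⟩ := H A.1 A.2 B.1 B.2 (hn ▸ hn2)
  have hsum := card_symmDiff_add_card_symmDiff_eq_iff.2
    (disjoint_symmDiff_symmDiff_iff.2 hbetween)
  have hAC := card_symmDiff_eq_zero.not.2 hCA.symm
  have hCB := card_symmDiff_eq_zero.not.2 hCB
  obtain ⟨p, hp⟩ := ih #(A.1 ∆ C) (by omega) A ⟨C, hC⟩ rfl
  obtain ⟨q, hq⟩ := ih #(C ∆ B.1) (by omega) ⟨C, hC⟩ B rfl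
  exact ⟨p.append q, by rw [Walk.length_append]; omega⟩

end OneInclusion

theorem wellGraded_iff_general {α : Type*} [DecidableEq α]
    (F : Finset (Finset α)) :
    WellGraded F ↔
      ∀ A ∈ F, ∀ B ∈ F, 2 ≤ (symmDiff A B).card →
        ∃ C ∈ F, C ≠ A ∧ C ≠ B ∧ A ∩ B ⊆ C ∧ C ⊆ A ∪ B := by
  refine ⟨fun h A hA B hB hAB => ?_,
    fun H => wellGraded_iff_exists_walk.2 (exists_walk_length_le_card_symmDiff H)⟩
  have hne : (⟨A, hA⟩ : {A // A ∈ F}) ≠ ⟨B, hB⟩ := fun h => by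
    rw [Subtype.mk.injEq] at h
    subst h
    simp at hAB
  obtain ⟨⟨C, hC⟩, hadj, hsum⟩ := h.exists_adj_card_symmDiff_add_eq hne
  have hstep : #(A ∆ C) = 1 := hadj
  refine ⟨C, hC, ?_, ?_,
    disjoint_symmDiff_symmDiff_iff.1 (card_symmDiff_add_card_symmDiff_eq_iff.1 hsum)⟩
  · rintro rfl
    simp at hstep
  · rintro rfl
    simp only [symmDiff_self, bot_eq_empty, card_empty] at hsum
    omega

/-- A finite set system is well-graded iff for every `A, B ∈ F` with
`|A △ B| ≥ 2` there is `C ∈ F`, different from `A` and `B`, with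
`A ∩ B ⊆ C ⊆ A ∪ B`. -/
theorem wellGraded_iff {α : Type*} [DecidableEq α]
    (F : Finset (Finset α)) (hF : F.Nonempty) :
    WellGraded F ↔
      ∀ A ∈ F, ∀ B ∈ F, 2 ≤ (symmDiff A B).card →
        ∃ C ∈ F, C ≠ A ∧ C ≠ B ∧ A ∩ B ⊆ C ∧ C ⊆ A ∪ B :=
  wellGraded_iff_general F
end

section
/- If (X, F) is a well-graded family and D ⊆ X is shattered by F, then every element a ∈ D appears as the label of at least 2^{|D|−1} edges of the one-inclusion graph G_F, where the label of an edge between A and A ∪ {b} is b. -/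
/-! Fix `a ∈ D` and `t ⊆ D \ {a}`, and pick `A, B ∈ F` tracing `t` and `t ∪ {a}` on `D`.
In a well-graded family some neighbour of `A` lies strictly between `A` and `B`, so walking
towards `B` one flips only elements of `A ∆ B`; the step flipping `a` is an `a`-labelled edge
whose lower endpoint `C` agrees with `A` off `A ∆ B`, hence traces `t` on `D \ {a}`. So the
lower endpoints of the `a`-labelled edges shatter `D \ {a}`, and there are `2 ^ (|D| - 1)` of
them at least. -/

open Finset

theorem Finset.Shatters.two_pow_card_le {α : Type*} [DecidableEq α] {𝒜 : Finset (Finset α)}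
    {s : Finset α} (h : 𝒜.Shatters s) : 2 ^ #s ≤ #𝒜 := by
  rw [← card_powerset, ← shatters_iff.1 h]
  exact card_image_le

theorem Finset.inter_eq_inter_of_symmDiff_subset {α : Type*} [DecidableEq α] {s a b c : Finset α}
    (hab : s ∩ a = s ∩ b) (hc : symmDiff a c ⊆ symmDiff a b) : s ∩ c = s ∩ a := by
  have hsab : s ∩ symmDiff a b = ∅ := by
    rwa [← bot_eq_empty, ← inf_eq_inter, inf_symmDiff_distrib_left, symmDiff_eq_bot]
  have hsac : s ∩ symmDiff a c = ∅ := subset_empty.1 (hsab ▸ inter_subset_inter_left hc)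
  rw [← bot_eq_empty, ← inf_eq_inter, inf_symmDiff_distrib_left, symmDiff_eq_bot] at hsac
  exact hsac.symm

/-- The lower endpoints `A` of the edges `{A, insert a A}` of `oneInclusion F` labelled `a`. -/
def labelEdges {α : Type*} [DecidableEq α] (F : Finset (Finset α)) (a : α) : Finset (Finset α) :=
  F.filter (fun A ↦ a ∉ A ∧ insert a A ∈ F)

namespace WellGraded

variable {α : Type*} [DecidableEq α] {F : Finset (Finset α)}

theorem exists_mem_symmDiff_singleton_mem (hWG : WellGraded F) {A B : Finset α} (hA : A ∈ F)
    (hB : B ∈ F) (hAB : A ≠ B) : ∃ x ∈ symmDiff A B, symmDiff A {x} ∈ F := by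
  have hdist : (oneInclusion F).dist ⟨A, hA⟩ ⟨B, hB⟩ = #(symmDiff A B) := hWG _ _
  have hpos : #(symmDiff A B) ≠ 0 := by
    rwa [Ne, card_eq_zero, ← bot_eq_empty, symmDiff_eq_bot]
  obtain ⟨p, hp⟩ := SimpleGraph.exists_walk_of_dist_ne_zero (hdist ▸ hpos)
  cases p with
  | nil => exact absurd hp.symm (hdist ▸ hpos)
  | @cons _ A' _ hadj q =>
    obtain ⟨x, hx⟩ := card_eq_one.1 hadj
    have hA' : symmDiff A {x} = A'.1 := by rw [← hx, symmDiff_symmDiff_cancel_left]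
    refine ⟨x, ?_, hA' ▸ A'.2⟩
    by_contra hxAB
    have hfar : symmDiff A'.1 B = insert x (symmDiff A B) := by
      rw [← hA', symmDiff_comm A, symmDiff_assoc,
        (disjoint_singleton_left.2 hxAB).symmDiff_eq_sup, sup_eq_union, insert_eq]
    have hnear : #(symmDiff A'.1 B) + 1 ≤ #(symmDiff A B) := by
      have hq : #(symmDiff A'.1 B) ≤ q.length := hWG A' ⟨B, hB⟩ ▸ SimpleGraph.dist_le q
      rw [SimpleGraph.Walk.length_cons, hdist] at hp
      omega
    rw [hfar, card_insert_of_notMem hxAB] at hnear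
    omega

theorem exists_insert_mem_symmDiff_subset (hWG : WellGraded F) {a : α} {A B : Finset α}
    (hA : A ∈ F) (hB : B ∈ F) (haA : a ∉ A) (haB : a ∈ B) :
    ∃ C ∈ F, a ∉ C ∧ insert a C ∈ F ∧ symmDiff A C ⊆ symmDiff A B := by
  induction hn : #(symmDiff A B) using Nat.strong_induction_on generalizing A with
  | _ n ih =>
  obtain ⟨x, hxAB, hx⟩ :=
    hWG.exists_mem_symmDiff_singleton_mem hA hB (ne_of_mem_of_not_mem' haB haA).symm
  by_cases hxa : x = a
  · subst hxa
    refine ⟨A, hA, haA, ?_, by simp⟩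
    rwa [(disjoint_singleton_right.2 haA).symmDiff_eq_sup, sup_eq_union, union_comm,
      ← insert_eq] at hx
  · have hA'B : symmDiff (symmDiff A {x}) B = (symmDiff A B).erase x := by
      rw [symmDiff_comm A, symmDiff_assoc, symmDiff_of_le (singleton_subset_iff.2 hxAB),
        sdiff_singleton_eq_erase]
    have haA' : a ∉ symmDiff A {x} := by simp [mem_symmDiff, haA, Ne.symm hxa]
    have hlt : #(symmDiff (symmDiff A {x}) B) < n := by
      rw [hA'B, card_erase_of_mem hxAB, ← hn]
      exact Nat.sub_lt (card_pos.2 ⟨x, hxAB⟩) one_pos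
    obtain ⟨C, hC, haC, hins, hsub⟩ := ih _ hlt hx haA' rfl
    refine ⟨C, hC, haC, hins, ?_⟩
    calc symmDiff A C ⊆ symmDiff A (symmDiff A {x}) ∪ symmDiff (symmDiff A {x}) C :=
          symmDiff_triangle A _ C
      _ ⊆ symmDiff A B := by
          refine union_subset ?_ (hsub.trans (hA'B ▸ erase_subset _ _))
          rwa [symmDiff_symmDiff_cancel_left, singleton_subset_iff]

theorem shatters_labelEdges (hWG : WellGraded F) {D : Finset α} (hD : F.Shatters D) {a : α}
    (ha : a ∈ D) : (labelEdges F a).Shatters (D.erase a) := by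
  intro t ht
  have haT : a ∉ t := fun h ↦ notMem_erase a D (ht h)
  have htD : t ⊆ D := ht.trans (erase_subset a D)
  obtain ⟨A, hA, hDA⟩ := hD htD
  obtain ⟨B, hB, hDB⟩ := hD (insert_subset ha htD)
  have haA : a ∉ A := fun h ↦ haT (hDA ▸ mem_inter.2 ⟨ha, h⟩)
  have haB : a ∈ B := (mem_inter.1 (hDB ▸ mem_insert_self a t : a ∈ D ∩ B)).2
  have hA' : D.erase a ∩ A = t := by rw [erase_inter, hDA, erase_eq_of_notMem haT]
  have hB' : D.erase a ∩ B = t := by rw [erase_inter, hDB, erase_insert haT]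
  obtain ⟨C, hC, haC, hins, hsub⟩ := hWG.exists_insert_mem_symmDiff_subset hA hB haA haB
  exact ⟨C, mem_filter.2 ⟨hC, haC, hins⟩,
    (inter_eq_inter_of_symmDiff_subset (hA'.trans hB'.symm) hsub).trans hA'⟩

end WellGraded

theorem wellGraded_label_count_general {α : Type*} [DecidableEq α]
    (F : Finset (Finset α)) (hWG : WellGraded F)
    (D : Finset α) (hD : F.Shatters D) :
    ∀ a ∈ D, 2 ^ (D.card - 1) ≤ (F.filter (fun A => a ∉ A ∧ insert a A ∈ F)).card := by
  intro a ha
  rw [← card_erase_of_mem ha]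
  exact (hWG.shatters_labelEdges hD ha).two_pow_card_le

/-- If `(X, F)` is well-graded and `D` is shattered by `F`, then every `a ∈ D`
appears as the label of at least `2 ^ (|D| - 1)` edges of the one-inclusion
graph; the edges labelled `a` correspond to members `A ∈ F` with `a ∉ A` and
`A ∪ {a} ∈ F`. -/
theorem wellGraded_label_count {α : Type*} [DecidableEq α]
    (F : Finset (Finset α)) (hF : F.Nonempty) (hWG : WellGraded F)
    (D : Finset α) (hD : F.Shatters D) :
    ∀ a ∈ D, 2 ^ (D.card - 1) ≤ (F.filter (fun A => a ∉ A ∧ insert a A ∈ F)).card :=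
  wellGraded_label_count_general F hWG D hD
end

section
/- If (X, F) is a well-graded family and a ∈ X is essential, then the subgraphs of the one-inclusion graph G_F induced on {A ∈ F : a ∈ A} and on {A ∈ F : a ∉ A} are both connected. -/
/-!
Along a shortest path of the one-inclusion graph of a well-graded family every edge flips an
element of `A ∆ B`, each exactly once, since the path has length `#(A ∆ B)`. So if `A` and `B`
agree on `a`, a shortest path from `A` to `B` never flips `a` and stays inside the half of the
family that `A` and `B` belong to.
-/

open Finset

theorem Finset.symmDiff_eq_union_of_card_add_card_eq {α : Type*} [DecidableEq α]
    {s t u : Finset α} (h : #(symmDiff s t) + #(symmDiff t u) = #(symmDiff s u)) :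
    symmDiff s u = symmDiff s t ∪ symmDiff t u := by
  have hsu : symmDiff s u = symmDiff (symmDiff s t) (symmDiff t u) := by
    rw [← symmDiff_assoc, symmDiff_symmDiff_cancel_right]
  have hle : #(symmDiff s u) ≤ #(symmDiff s t ∪ symmDiff t u) :=
    hsu ▸ card_le_card symmDiff_le_sup
  have hdisj : Disjoint (symmDiff s t) (symmDiff t u) := by
    have := card_union_add_card_inter (symmDiff s t) (symmDiff t u)
    rw [disjoint_iff_inter_eq_empty, ← card_eq_zero]
    omega
  rw [hsu, hdisj.symmDiff_eq_sup, sup_eq_union]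

namespace SimpleGraph

variable {V : Type*} {G : SimpleGraph V} {u v : V}

theorem Reachable.exists_adj_dist_add_one_eq (huv : G.Reachable u v) (hne : u ≠ v) :
    ∃ w, G.Adj u w ∧ G.dist w v + 1 = G.dist u v := by
  obtain ⟨p, hp⟩ := huv.exists_walk_length_eq_dist
  cases p with
  | nil => exact absurd rfl hne
  | cons huw q =>
    refine ⟨_, huw, le_antisymm ?_ ?_⟩
    · rw [← hp, Walk.length_cons]
      exact Nat.add_le_add_right (dist_le q) 1
    · have := huw.reachable.dist_triangle_left v
      rw [dist_eq_one_iff_adj.mpr huw] at this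
      omega

theorem Reachable.induce_of_geodesic_step_mem {s : Set V}
    (hs : ∀ ⦃u w v⦄, u ∈ s → v ∈ s → G.Adj u w → G.dist w v + 1 = G.dist u v → w ∈ s)
    (huv : G.Reachable u v) (hu : u ∈ s) (hv : v ∈ s) :
    (G.induce s).Reachable ⟨u, hu⟩ ⟨v, hv⟩ := by
  induction hn : G.dist u v generalizing u with
  | zero =>
    obtain rfl : u = v := huv.dist_eq_zero_iff.mp hn
    rfl
  | succ n ih =>
    obtain ⟨w, huw, hwv⟩ := huv.exists_adj_dist_add_one_eq (by rintro rfl; simp at hn)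
    have hw : w ∈ s := hs hu hv huw hwv
    have hstep : (G.induce s).Adj ⟨u, hu⟩ ⟨w, hw⟩ := huw
    exact hstep.reachable.trans (ih (huw.symm.reachable.trans huv) hw (by omega))

end SimpleGraph

namespace WellGraded

variable {α : Type*} [DecidableEq α] {F : Finset (Finset α)}

theorem reachable (hWG : WellGraded F) (A B : {A : Finset α // A ∈ F}) :
    (oneInclusion F).Reachable A B := by
  obtain rfl | hne := eq_or_ne A B
  · rfl
  refine SimpleGraph.Reachable.of_dist_ne_zero ?_
  rw [hWG, Ne, card_eq_zero, ← bot_eq_empty, symmDiff_eq_bot]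
  exact fun h => hne (Subtype.ext h)

theorem symmDiff_eq_union_of_dist_add_dist_eq (hWG : WellGraded F)
    {A B C : {A : Finset α // A ∈ F}}
    (h : (oneInclusion F).dist A C + (oneInclusion F).dist C B = (oneInclusion F).dist A B) :
    symmDiff A.1 B.1 = symmDiff A.1 C.1 ∪ symmDiff C.1 B.1 := by
  rw [hWG, hWG, hWG] at h
  exact symmDiff_eq_union_of_card_add_card_eq h

theorem connected_induce (hWG : WellGraded F) (a : α) {s : Set {A : Finset α // A ∈ F}}
    (hs : ∀ A B, A ∈ s → (B ∈ s ↔ (a ∈ A.1 ↔ a ∈ B.1))) (hne : s.Nonempty) :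
    ((oneInclusion F).induce s).Connected := by
  have := hne.to_subtype
  refine ⟨fun ⟨X, hX⟩ ⟨Y, hY⟩ => (hWG.reachable X Y).induce_of_geodesic_step_mem ?_ hX hY⟩
  intro A C B hA hB hAC hCB
  have hsplit := hWG.symmDiff_eq_union_of_dist_add_dist_eq (A := A) (B := B) (C := C) (by
    rw [SimpleGraph.dist_eq_one_iff_adj.mpr hAC, add_comm, hCB])
  have haAB : a ∉ symmDiff A.1 B.1 := by simp [mem_symmDiff, (hs A B hA).mp hB]
  have haAC : a ∉ symmDiff A.1 C.1 := fun h => haAB (by rw [hsplit]; exact mem_union_left _ h)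
  exact (hs A C hA).mpr (by rw [mem_symmDiff] at haAC; tauto)

end WellGraded

/-- If `(X, F)` is well-graded and `a` is essential, then the subgraphs of the
one-inclusion graph induced on the members containing `a`, and on the members
not containing `a`, are both connected. -/
theorem induced_connected {α : Type*} [DecidableEq α]
    (F : Finset (Finset α)) (hWG : WellGraded F) (a : α)
    (h1 : ∃ A ∈ F, a ∈ A) (h2 : ∃ B ∈ F, a ∉ B) :
    ((oneInclusion F).induce {A : {A : Finset α // A ∈ F} | a ∈ A.1}).Connected ∧
    ((oneInclusion F).induce {A : {A : Finset α // A ∈ F} | a ∉ A.1}).Connected := by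
  obtain ⟨A, hAF, haA⟩ := h1
  obtain ⟨B, hBF, haB⟩ := h2
  exact ⟨hWG.connected_induce a (fun _ _ hA => by simp_all) ⟨⟨A, hAF⟩, haA⟩,
    hWG.connected_induce a (fun _ _ hA => by simp_all) ⟨⟨B, hBF⟩, haB⟩⟩
end

section
/- If (X, F) is a well-graded finite set system, then |ess_F(X)| + 1 ≤ |F| ≤ |E(G_F)| + 1, where ess_F(X) is the set of essential elements of X and E(G_F) is the edge set of the one-inclusion graph. In particular, every well-graded family satisfies |F| ≥ |ess_F(X)| + 1, i.e., has positive additionality. -/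
instance {α : Type*} [DecidableEq α] (F : Finset (Finset α)) :
    DecidableRel (oneInclusion F).Adj :=
  fun A B => inferInstanceAs (Decidable ((symmDiff A.1 B.1).card = 1))

/-- The set of essential elements of the domain: those contained in some member
of `F` and omitted by some member of `F`. -/
def essSet {α : Type*} [DecidableEq α] [Fintype α] (F : Finset (Finset α)) :
    Finset α :=
  Finset.univ.filter (fun x => (∃ A ∈ F, x ∈ A) ∧ ∃ B ∈ F, x ∉ B)

/-!
Well-gradedness makes the one-inclusion graph `G_F` connected, so `G_F` has at least `|F| - 1`
edges and a spanning tree with exactly `|F| - 1` edges. An edge of `G_F` flips exactly one element,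
and every essential element `x` is flipped by some tree edge: on a tree walk from a member
containing `x` to one omitting `x`, some step leaves the members containing `x`.
-/

section

open SimpleGraph Finset

variable {α : Type*} [DecidableEq α] {F : Finset (Finset α)}

theorem WellGraded.connected (hWG : WellGraded F) (hF : F.Nonempty) :
    (oneInclusion F).Connected := by
  have : Nonempty {A // A ∈ F} := hF.to_subtype
  refine ⟨fun A B => ?_⟩
  by_cases hAB : A = B
  · exact hAB ▸ Reachable.refl A
  · refine Reachable.of_dist_ne_zero ?_
    rw [hWG, Ne, card_eq_zero, symmDiff_eq_empty]
    exact fun h => hAB (Subtype.ext h)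

variable (F) in
def edgeSymmDiff : Sym2 {A // A ∈ F} → Finset α :=
  Sym2.lift ⟨fun A B => symmDiff A.1 B.1, fun _ _ => symmDiff_comm _ _⟩

theorem card_edgeSymmDiff {e : Sym2 {A // A ∈ F}} (he : e ∈ (oneInclusion F).edgeSet) :
    (edgeSymmDiff F e).card = 1 := by
  induction e using Sym2.ind with
  | h _ _ => exact he

section Fintype

variable [Fintype α]

theorem essSet_subset_biUnion_edgeSymmDiff {H : SimpleGraph {A // A ∈ F}} [Fintype H.edgeSet]
    (hH : H.Connected) : essSet F ⊆ H.edgeFinset.biUnion (edgeSymmDiff F) := by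
  intro x hx
  obtain ⟨-, ⟨A, hA, hxA⟩, ⟨B, hB, hxB⟩⟩ := mem_filter.mp hx
  obtain ⟨p⟩ := hH.preconnected ⟨A, hA⟩ ⟨B, hB⟩
  obtain ⟨d, -, hxd₁, hxd₂⟩ := p.exists_boundary_dart {C | x ∈ C.1} hxA hxB
  exact mem_biUnion.mpr
    ⟨d.edge, mem_edgeFinset.mpr d.edge_mem, mem_symmDiff.mpr (Or.inl ⟨hxd₁, hxd₂⟩)⟩

theorem card_essSet_le_card_edgeFinset {H : SimpleGraph {A // A ∈ F}} [Fintype H.edgeSet]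
    (hH : H.Connected) (hle : H ≤ oneInclusion F) : (essSet F).card ≤ H.edgeFinset.card :=
  calc (essSet F).card
      ≤ (H.edgeFinset.biUnion (edgeSymmDiff F)).card :=
        card_le_card (essSet_subset_biUnion_edgeSymmDiff hH)
    _ ≤ H.edgeFinset.card * 1 := card_biUnion_le_card_mul _ _ _ fun _ he =>
        (card_edgeSymmDiff (edgeSet_mono hle (mem_edgeFinset.mp he))).le
    _ = H.edgeFinset.card := mul_one _

theorem card_essSet_add_one_le_card (h : (oneInclusion F).Connected) :
    (essSet F).card + 1 ≤ F.card := by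
  classical
  obtain ⟨T, hle, hT⟩ := h.exists_isTree_le
  have hTcard := hT.card_edgeFinset
  rw [Fintype.card_coe] at hTcard
  have := card_essSet_le_card_edgeFinset hT.connected hle
  omega

end Fintype

theorem card_le_card_edgeFinset_oneInclusion_add_one (h : (oneInclusion F).Connected) :
    F.card ≤ (oneInclusion F).edgeFinset.card + 1 := by
  simpa [Nat.card_eq_fintype_card, edgeFinset_card] using h.card_vert_le_card_edgeSet_add_one

end

/-- For a well-graded family, `|ess_F(X)| + 1 ≤ |F| ≤ |E(G_F)| + 1`; in
particular the additionality `|F| − |ess_F(X)|` is positive. -/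
theorem wellGraded_card_bounds {α : Type*} [DecidableEq α] [Fintype α]
    (F : Finset (Finset α)) (hF : F.Nonempty) (hWG : WellGraded F) :
    (essSet F).card + 1 ≤ F.card ∧
      F.card ≤ (oneInclusion F).edgeFinset.card + 1 :=
  have hconn := hWG.connected hF
  ⟨card_essSet_add_one_le_card hconn, card_le_card_edgeFinset_oneInclusion_add_one hconn⟩
end

section
/- Let (X, F) be a well-graded family with ∅ ∈ F and additionality r. Then for every nonempty set U of members of F, letting st(U) = ⋃_{A ∈ U} A and below(U) = {B ∈ F : ∃ A ∈ U, B ⊆ A}, we have |st(U)| + 1 ≤ |below(U)| ≤ |st(U)| + r. -/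
/-!
Since `∅ ∈ F`, well-gradedness makes `F` accessible: the first step of a geodesic from a nonempty
member `A` to `∅` in the one-inclusion graph removes an element of `A`. In an accessible family the
map sending `y` to a member of least size containing `y` is injective, because such a member can
only lose `y` and stay in the family. Hence, for every `D`, `|⋃F \ ⋃D| ≤ |F \ D|`. Applied to the
accessible family `below(U)` with `D = {∅}` this gives the lower bound; applied to `F` with
`D = below(U)` it gives the upper bound, as `⋃F` is the set of essential elements when `∅ ∈ F`.
-/

namespace SimpleGraph

lemma exists_adj_dist_lt {V : Type*} {G : SimpleGraph V} {u v : V} (h : G.dist u v ≠ 0) :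
    ∃ w, G.Adj u w ∧ G.dist w v < G.dist u v := by
  obtain ⟨p, hp⟩ := exists_walk_of_dist_ne_zero h
  obtain ⟨w, hadj, q, rfl⟩ := p.exists_eq_cons_of_ne (dist_ne_zero_iff_ne_and_reachable.mp h).1
  refine ⟨w, hadj, ?_⟩
  have hq := dist_le q
  rw [Walk.length_cons] at hp
  omega

end SimpleGraph

namespace Finset

variable {α : Type*} [DecidableEq α]

lemma exists_eq_erase_of_card_symmDiff_eq_one {A B : Finset α} (hAB : (symmDiff A B).card = 1)
    (hlt : B.card < A.card) : ∃ x ∈ A, B = A.erase x := by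
  obtain ⟨x, hx⟩ := card_eq_one.mp hAB
  have hB : B = symmDiff A {x} := by rw [← hx, symmDiff_symmDiff_cancel_left]
  by_cases hxA : x ∈ A
  · refine ⟨x, hxA, ?_⟩
    rw [hB, symmDiff_of_ge (singleton_subset_iff.mpr hxA), sdiff_singleton_eq_erase]
  · have hAB : A ⊆ B := fun y hy => by
      rw [hB, mem_symmDiff, mem_singleton]
      exact .inl ⟨hy, fun h => hxA (h ▸ hy)⟩
    exact absurd (card_le_card hAB) hlt.not_ge

end Finset

section Accessible

variable {α : Type*} [DecidableEq α]

def Accessible (F : Finset (Finset α)) : Prop :=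
  ∀ A ∈ F, A.Nonempty → ∃ x ∈ A, A.erase x ∈ F

lemma WellGraded.accessible {F : Finset (Finset α)} (hWG : WellGraded F) (h0 : ∅ ∈ F) :
    Accessible F := by
  intro A hA hAne
  have hdist : ∀ B : {B // B ∈ F}, (oneInclusion F).dist B ⟨∅, h0⟩ = B.1.card := fun B =>
    (hWG B ⟨∅, h0⟩).trans (congrArg Finset.card (symmDiff_bot B.1))
  obtain ⟨B, hadj, hlt⟩ := SimpleGraph.exists_adj_dist_lt (G := oneInclusion F)
    (u := ⟨A, hA⟩) (v := ⟨∅, h0⟩) (by rw [hdist]; exact hAne.card_ne_zero)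
  rw [hdist, hdist] at hlt
  obtain ⟨x, hxA, hB⟩ := Finset.exists_eq_erase_of_card_symmDiff_eq_one hadj hlt
  exact ⟨x, hxA, hB ▸ B.2⟩

lemma Accessible.filter {F : Finset (Finset α)} (hF : Accessible F) {p : Finset α → Prop}
    [DecidablePred p] (hp : ∀ ⦃A B⦄, B ⊆ A → p A → p B) : Accessible (F.filter p) := by
  intro A hA hAne
  rw [Finset.mem_filter] at hA
  obtain ⟨x, hxA, hAx⟩ := hF A hA.1 hAne
  exact ⟨x, hxA, Finset.mem_filter.mpr ⟨hAx, hp (A.erase_subset x) hA.2⟩⟩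

lemma Accessible.eq_of_mem_of_minimal {F : Finset (Finset α)} (hF : Accessible F) {B : Finset α}
    (hB : B ∈ F) {y z : α} (hyB : y ∈ B) (hzB : z ∈ B)
    (hy : ∀ C ∈ F, y ∈ C → B.card ≤ C.card) (hz : ∀ C ∈ F, z ∈ C → B.card ≤ C.card) :
    y = z := by
  obtain ⟨x, hxB, hBx⟩ := hF B hB ⟨y, hyB⟩
  have hlt := Finset.card_erase_lt_of_mem hxB
  have key : ∀ w ∈ B, (∀ C ∈ F, w ∈ C → B.card ≤ C.card) → x = w := fun w hwB hw => by
    by_contra hxw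
    exact (hw _ hBx (Finset.mem_erase.mpr ⟨Ne.symm hxw, hwB⟩)).not_gt hlt
  exact (key y hyB hy).symm.trans (key z hzB hz)

lemma Accessible.card_sup_sdiff_le {F : Finset (Finset α)} (hF : Accessible F)
    (D : Finset (Finset α)) : (F.sup id \ D.sup id).card ≤ (F \ D).card := by
  refine Finset.card_le_card_of_forall_subsingleton
    (fun y B => B ∈ F ∧ y ∈ B ∧ ∀ C ∈ F, y ∈ C → B.card ≤ C.card) ?_ ?_
  · intro y hy
    obtain ⟨hyF, hyD⟩ := Finset.mem_sdiff.mp hy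
    obtain ⟨A, hA, hyA⟩ := Finset.mem_sup.mp hyF
    obtain ⟨B, hB, hmin⟩ :=
      (F.filter (y ∈ ·)).exists_min_image Finset.card ⟨A, Finset.mem_filter.mpr ⟨hA, hyA⟩⟩
    rw [Finset.mem_filter] at hB
    refine ⟨B, Finset.mem_sdiff.mpr ⟨hB.1, fun hBD => hyD ?_⟩, hB.1, hB.2, ?_⟩
    · exact Finset.mem_sup.mpr ⟨B, hBD, hB.2⟩
    · exact fun C hC hyC => hmin C (Finset.mem_filter.mpr ⟨hC, hyC⟩)
  · rintro B - y ⟨-, hB, hyB, hy⟩ z ⟨-, -, hzB, hz⟩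
    exact hF.eq_of_mem_of_minimal hB hyB hzB hy hz

end Accessible

lemma essSet_eq_sup_id {α : Type*} [DecidableEq α] [Fintype α] {F : Finset (Finset α)}
    (h0 : ∅ ∈ F) : essSet F = F.sup id := by
  ext x
  simp only [essSet, Finset.mem_filter, Finset.mem_univ, true_and, Finset.mem_sup, id]
  exact ⟨And.left, fun h => ⟨h, ∅, h0, Finset.notMem_empty x⟩⟩

lemma sup_id_filter_exists_subset {α : Type*} [DecidableEq α] {F U : Finset (Finset α)}
    (hUF : U ⊆ F) : (F.filter fun B => ∃ A ∈ U, B ⊆ A).sup id = U.sup id := by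
  refine le_antisymm (Finset.sup_le fun B hB => ?_) (Finset.sup_mono fun A hA => ?_)
  · obtain ⟨-, A, hA, hBA⟩ := Finset.mem_filter.mp hB
    exact hBA.trans (Finset.le_sup (f := id) hA)
  · exact Finset.mem_filter.mpr ⟨hUF hA, A, hA, subset_rfl⟩

/-- Let `(X, F)` be well-graded with `∅ ∈ F` and additionality `r`. For every
nonempty set `U` of members of `F`, with `st(U)` the union of the members of
`U` and `below(U)` the set of members of `F` contained in some member of `U`,
we have `|st(U)| + 1 ≤ |below(U)| ≤ |st(U)| + r`. -/
theorem below_card_bounds {α : Type*} [DecidableEq α] [Fintype α]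
    (F : Finset (Finset α)) (hWG : WellGraded F) (h0 : ∅ ∈ F)
    (r : ℕ) (hr : F.card = (essSet F).card + r)
    (U : Finset (Finset α)) (hUF : U ⊆ F) (hU : U.Nonempty) :
    (U.sup id).card + 1 ≤ (F.filter (fun B => ∃ A ∈ U, B ⊆ A)).card ∧
      (F.filter (fun B => ∃ A ∈ U, B ⊆ A)).card ≤ (U.sup id).card + r := by
  set L := F.filter (fun B => ∃ A ∈ U, B ⊆ A)
  have hLF : L ⊆ F := Finset.filter_subset _ _
  obtain ⟨A₀, hA₀⟩ := hU
  have h0L : ∅ ∈ L := Finset.mem_filter.mpr ⟨h0, A₀, hA₀, Finset.empty_subset A₀⟩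
  have hF := hWG.accessible h0
  have hL : Accessible L := hF.filter fun _ _ hBA ⟨C, hC, hAC⟩ => ⟨C, hC, hBA.trans hAC⟩
  have hlow := hL.card_sup_sdiff_le {∅}
  rw [Finset.sup_singleton, id, Finset.sdiff_empty, sup_id_filter_exists_subset hUF,
    Finset.card_sdiff_of_subset (Finset.singleton_subset_iff.mpr h0L), Finset.card_singleton]
    at hlow
  have hup := hF.card_sup_sdiff_le L
  rw [Finset.card_sdiff_of_subset (Finset.sup_mono hLF), Finset.card_sdiff_of_subset hLF,
    sup_id_filter_exists_subset hUF] at hup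
  rw [essSet_eq_sup_id h0] at hr
  have hsupLF : (U.sup id).card ≤ (F.sup id).card :=
    Finset.card_le_card (sup_id_filter_exists_subset hUF ▸ Finset.sup_mono hLF)
  have hcardLF := Finset.card_le_card hLF
  have hcardL := Finset.card_pos.mpr ⟨∅, h0L⟩
  omega
end

section
/- A finite set system (X, F) is well-graded with VC-dimension at most 1 if and only if it is well-graded with additionality 1, i.e., |F| = |ess_F(X)| + 1. -/
/-- The VC-dimension of a finite set system: the largest size of a shattered
subset. -/
def vcDim {α : Type*} [DecidableEq α] (F : Finset (Finset α)) : ℕ :=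
  F.shatterer.sup Finset.card

section

open Finset hiding vcDim
open Relation
open scoped symmDiff

variable {α : Type*} [DecidableEq α] {F : Finset (Finset α)}

theorem Finset.symmDiff_singleton_symmDiff_of_mem {A B : Finset α} {z : α} (hz : z ∈ A ∆ B) :
    (A ∆ {z}) ∆ B = (A ∆ B).erase z := by
  ext x
  by_cases hx : x = z
  · subst hx
    simp only [mem_symmDiff] at hz
    simp only [mem_erase, ne_eq, not_true_eq_false, false_and, iff_false, mem_symmDiff,
      mem_singleton]
    tauto
  · simp [mem_symmDiff, hx]

theorem Finset.mem_symmDiff_of_card_symmDiff_singleton_lt {A B : Finset α} {z : α}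
    (h : #((A ∆ {z}) ∆ B) < #(A ∆ B)) : z ∈ A ∆ B := by
  by_contra hz
  refine h.not_ge (card_le_card fun x hx => ?_)
  have hxz : x ≠ z := by rintro rfl; exact hz hx
  simpa [mem_symmDiff, hxz] using hx

theorem Finset.shatters_pair_iff {x y : α} (hxy : x ≠ y) :
    F.Shatters {x, y} ↔ ∀ P Q : Prop, ∃ u ∈ F, (x ∈ u ↔ P) ∧ (y ∈ u ↔ Q) := by
  classical
  constructor
  · intro h P Q
    obtain ⟨u, hu, hut⟩ := h (filter_subset (fun a => (a = x ∧ P) ∨ (a = y ∧ Q)) {x, y})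
    have hmem (a : α) := congrArg (a ∈ ·) hut
    exact ⟨u, hu, by simpa [hxy] using hmem x, by simpa [hxy.symm] using hmem y⟩
  · intro h t ht
    obtain ⟨u, hu, hx, hy⟩ := h (x ∈ t) (y ∈ t)
    refine ⟨u, hu, ext fun a => ?_⟩
    simp only [mem_inter, mem_insert, mem_singleton]
    constructor
    · rintro ⟨rfl | rfl, ha⟩
      exacts [hx.1 ha, hy.1 ha]
    · intro ha
      obtain rfl | rfl : a = x ∨ a = y := by simpa using ht ha
      exacts [⟨.inl rfl, hx.2 ha⟩, ⟨.inr rfl, hy.2 ha⟩]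

theorem Finset.shatters_pair_of_symmDiff_singleton_mem {A B : Finset α}
    {y z : α} (hA : A ∈ F) (hA' : A ∆ {z} ∈ F) (hB : B ∈ F) (hB' : B ∆ {z} ∈ F)
    (hy : y ∈ A ∆ B) (hyz : y ≠ z) : F.Shatters {y, z} := by
  rw [shatters_pair_iff hyz]
  intro P Q
  obtain ⟨S, hS, hS', hyS⟩ : ∃ S ∈ F, S ∆ {z} ∈ F ∧ (y ∈ S ↔ P) := by
    rw [mem_symmDiff] at hy
    by_cases hyA : y ∈ A ↔ P
    exacts [⟨A, hA, hA', hyA⟩, ⟨B, hB, hB', by tauto⟩]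
  by_cases hzS : z ∈ S ↔ Q
  · exact ⟨S, hS, hyS, hzS⟩
  · refine ⟨S ∆ {z}, hS', by simpa [mem_symmDiff, hyz] using hyS, ?_⟩
    simp only [mem_symmDiff, mem_singleton, not_true_eq_false, true_and]
    tauto

theorem vcDim_le_one_iff :
    vcDim F ≤ 1 ↔ ∀ x y, x ≠ y → ¬ F.Shatters {x, y} := by
  change F.vcDim ≤ 1 ↔ _
  refine ⟨fun h x y hxy hs => ?_, fun h => Finset.sup_le fun s hs => ?_⟩
  · have := hs.card_le_vcDim
    rw [card_pair hxy] at this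
    omega
  · by_contra! hlt
    obtain ⟨x, hx, y, hy, hxy⟩ := one_lt_card.1 hlt
    exact h x y hxy <|
      (mem_shatterer.1 hs).mono_right (insert_subset hx (singleton_subset_iff.2 hy))

theorem mem_essSet_iff [Fintype α] {A₀ : Finset α} (hA₀ : A₀ ∈ F) {x : α} :
    x ∈ essSet F ↔ ∃ A ∈ F, x ∈ A ∆ A₀ := by
  simp only [essSet, mem_filter, mem_univ, true_and, mem_symmDiff]
  constructor
  · rintro ⟨⟨A, hA, hxA⟩, B, hB, hxB⟩
    by_cases hx : x ∈ A₀
    exacts [⟨B, hB, .inr ⟨hx, hxB⟩⟩, ⟨A, hA, .inl ⟨hxA, hx⟩⟩]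
  · rintro ⟨A, hA, ⟨hxA, hx⟩ | ⟨hx, hxA⟩⟩
    exacts [⟨⟨A, hA, hxA⟩, A₀, hA₀, hx⟩, ⟨⟨A₀, hA₀, hx⟩, A, hA, hxA⟩]

theorem WellGraded.exists_symmDiff_singleton_mem (hF : WellGraded F)
    {A B : Finset α} (hA : A ∈ F) (hB : B ∈ F) (hAB : A ≠ B) :
    ∃ z ∈ A ∆ B, A ∆ {z} ∈ F := by
  have hdist : (oneInclusion F).dist ⟨A, hA⟩ ⟨B, hB⟩ = #(A ∆ B) := hF _ _
  have hreach : (oneInclusion F).Reachable ⟨A, hA⟩ ⟨B, hB⟩ :=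
    SimpleGraph.Reachable.of_dist_ne_zero (by simpa [hdist] using hAB)
  obtain ⟨w, hw⟩ := hreach.exists_walk_length_eq_dist
  cases w with
  | nil => simp at hAB
  | @cons _ C _ hAC q =>
    obtain ⟨z, hz⟩ := card_eq_one.1 hAC
    have hC : A ∆ {z} = C.1 := by rw [← hz, symmDiff_symmDiff_cancel_left]
    have hCB : (oneInclusion F).dist C ⟨B, hB⟩ = #(C.1 ∆ B) := hF _ _
    have hq := SimpleGraph.dist_le q
    simp only [SimpleGraph.Walk.length_cons] at hw
    refine ⟨z, mem_symmDiff_of_card_symmDiff_singleton_lt ?_, hC ▸ C.2⟩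
    rw [hC]
    omega

/-- `p` is the parent map of a shortest-path tree of `F` rooted at `A₀`. -/
def IsParentMap (F : Finset (Finset α)) (A₀ : Finset α) (p : Finset α → Finset α) : Prop :=
  ∀ A ∈ F, A ≠ A₀ → p A ∈ F ∧ ∃ z ∈ A ∆ A₀, p A = A ∆ {z}

def ParentStep (A₀ : Finset α) (p : Finset α → Finset α) (A B : Finset α) : Prop :=
  A ≠ A₀ ∧ p A = B

theorem WellGraded.exists_isParentMap (hF : WellGraded F)
    {A₀ : Finset α} (hA₀ : A₀ ∈ F) : ∃ p, IsParentMap F A₀ p := by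
  have h : ∀ A, ∃ B, A ∈ F → A ≠ A₀ → B ∈ F ∧ ∃ z ∈ A ∆ A₀, B = A ∆ {z} := fun A => by
    by_cases hA : A ∈ F ∧ A ≠ A₀
    · obtain ⟨z, hz, hzF⟩ := hF.exists_symmDiff_singleton_mem hA.1 hA₀ hA.2
      exact ⟨A ∆ {z}, fun _ _ => ⟨hzF, z, hz, rfl⟩⟩
    · exact ⟨A, fun h₁ h₂ => absurd ⟨h₁, h₂⟩ hA⟩
  choose p hp using h
  exact ⟨p, hp⟩

namespace IsParentMap

variable {A₀ : Finset α} {p : Finset α → Finset α}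

theorem mem_of_reflTransGen (hp : IsParentMap F A₀ p) {A B : Finset α}
    (h : ReflTransGen (ParentStep A₀ p) A B) (hA : A ∈ F) : B ∈ F := by
  induction h with
  | refl => exact hA
  | tail _ hstep ih => exact hstep.2 ▸ (hp _ ih hstep.1).1

theorem symmDiff_parent (hp : IsParentMap F A₀ p) {A : Finset α} (hA : A ∈ F) (hA₀ : A ≠ A₀) :
    ∃ z ∈ A ∆ A₀, A ∆ p A = {z} ∧ p A ∆ A₀ = (A ∆ A₀).erase z := by
  obtain ⟨-, z, hz, hpA⟩ := hp A hA hA₀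
  exact ⟨z, hz, by rw [hpA, symmDiff_symmDiff_cancel_left],
    by rw [hpA, symmDiff_singleton_symmDiff_of_mem hz]⟩

theorem mem_symmDiff_iff (hp : IsParentMap F A₀ p) {A : Finset α} (hA : A ∈ F) {x : α} :
    x ∈ A ∆ A₀ ↔ ∃ B, ReflTransGen (ParentStep A₀ p) A B ∧ B ≠ A₀ ∧ B ∆ p B = {x} := by
  induction hn : #(A ∆ A₀) using Nat.strong_induction_on generalizing A with
  | _ n ih =>
  by_cases hA₀ : A = A₀
  · subst hA₀
    simp only [symmDiff_self, bot_eq_empty, notMem_empty, false_iff, not_exists, not_and]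
    intro B hB hBA
    rcases ReflTransGen.cases_head hB with rfl | ⟨_, hstep, _⟩
    · exact absurd rfl hBA
    · exact absurd rfl hstep.1
  obtain ⟨z, hz, hlabel, hdist⟩ := hp.symmDiff_parent hA hA₀
  have ih' := ih _ (hn ▸ hdist ▸ card_erase_lt_of_mem hz) (hp A hA hA₀).1 rfl
  rw [hdist, mem_erase] at ih'
  constructor
  · intro hx
    by_cases hxz : x = z
    · exact ⟨A, .refl, hA₀, hxz ▸ hlabel⟩
    · obtain ⟨B, hB, hBA₀, hBx⟩ := ih'.1 ⟨hxz, hx⟩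
      exact ⟨B, .head ⟨hA₀, rfl⟩ hB, hBA₀, hBx⟩
  · rintro ⟨B, hB, hBA₀, hBx⟩
    rcases ReflTransGen.cases_head hB with rfl | ⟨_, ⟨-, rfl⟩, hB'⟩
    · rwa [← singleton_inj.1 (hlabel.symm.trans hBx)]
    · exact (ih'.2 ⟨B, hB', hBA₀, hBx⟩).2

theorem image_symmDiff_parent [Fintype α] (hp : IsParentMap F A₀ p) (hA₀ : A₀ ∈ F) :
    (F.erase A₀).image (fun A => A ∆ p A) = (essSet F).image singleton := by
  ext S
  simp only [mem_image, mem_erase]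
  constructor
  · rintro ⟨A, ⟨hAA₀, hA⟩, rfl⟩
    obtain ⟨z, hz, hlabel, -⟩ := hp.symmDiff_parent hA hAA₀
    exact ⟨z, (mem_essSet_iff hA₀).2 ⟨A, hA, hz⟩, hlabel.symm⟩
  · rintro ⟨x, hx, rfl⟩
    obtain ⟨A, hA, hxA⟩ := (mem_essSet_iff hA₀).1 hx
    obtain ⟨B, hAB, hBA₀, hBx⟩ := (hp.mem_symmDiff_iff hA).1 hxA
    exact ⟨B, ⟨hBA₀, hp.mem_of_reflTransGen hAB hA⟩, hBx⟩

theorem card_eq_card_essSet_add_one_iff [Fintype α] (hp : IsParentMap F A₀ p) (hA₀ : A₀ ∈ F) :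
    #F = #(essSet F) + 1 ↔ Set.InjOn (fun A => A ∆ p A) (F.erase A₀) := by
  rw [← card_image_iff, hp.image_symmDiff_parent hA₀,
    card_image_of_injective _ singleton_injective, card_erase_of_mem hA₀]
  have := card_pos.2 ⟨A₀, hA₀⟩
  omega

theorem injOn_of_vcDim_le_one (hp : IsParentMap F A₀ p) (hvc : vcDim F ≤ 1) :
    Set.InjOn (fun A => A ∆ p A) (F.erase A₀) := by
  intro A hA B hB hAB
  rw [coe_erase, Set.mem_sdiff, mem_coe, Set.mem_singleton_iff] at hA hB
  obtain ⟨hpA, z, hz, hpAe⟩ := hp A hA.1 hA.2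
  obtain ⟨hpB, w, hw, hpBe⟩ := hp B hB.1 hB.2
  obtain rfl : z = w := by simpa [hpAe, hpBe, symmDiff_symmDiff_cancel_left] using hAB
  by_contra hne
  obtain ⟨y, hy⟩ := symmDiff_nonempty.2 hne
  have hyz : y ≠ z := by
    rintro rfl
    simp only [mem_symmDiff] at hy hz hw
    tauto
  exact vcDim_le_one_iff.1 hvc y z hyz (shatters_pair_of_symmDiff_singleton_mem hA.1
    (hpAe ▸ hpA) hB.1 (hpBe ▸ hpB) hy hyz)

theorem mem_symmDiff_iff_of_injOn (hp : IsParentMap F A₀ p)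
    (hinj : Set.InjOn (fun A => A ∆ p A) (F.erase A₀)) {A B : Finset α} {x : α} (hA : A ∈ F)
    (hB : B ∈ F.erase A₀) (hBx : B ∆ p B = {x}) :
    x ∈ A ∆ A₀ ↔ ReflTransGen (ParentStep A₀ p) A B := by
  rw [hp.mem_symmDiff_iff hA]
  refine ⟨fun ⟨B', hAB', hB'A₀, hB'x⟩ => ?_, fun hAB => ⟨B, hAB, (mem_erase.1 hB).1, hBx⟩⟩
  have hB' : B' ∈ F.erase A₀ := mem_erase.2 ⟨hB'A₀, hp.mem_of_reflTransGen hAB' hA⟩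
  rwa [← hinj hB' hB (hB'x.trans hBx.symm)]

theorem vcDim_le_one_of_injOn (hp : IsParentMap F A₀ p)
    (hinj : Set.InjOn (fun A => A ∆ p A) (F.erase A₀)) : vcDim F ≤ 1 := by
  rw [vcDim_le_one_iff]
  intro x y hxy hsh
  have htrace (P Q : Prop) : ∃ A ∈ F, (x ∈ A ∆ A₀ ↔ P) ∧ (y ∈ A ∆ A₀ ↔ Q) := by
    obtain ⟨A, hA, hx, hy⟩ := (shatters_pair_iff hxy).1 hsh (x ∈ A₀ ↔ ¬P) (y ∈ A₀ ↔ ¬Q)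
    refine ⟨A, hA, ?_, ?_⟩ <;> simp only [mem_symmDiff] <;> tauto
  obtain ⟨A, hA, hxA, hyA⟩ := htrace True True
  obtain ⟨Bx, hABx, hBxA₀, hBx⟩ := (hp.mem_symmDiff_iff hA).1 (hxA.2 trivial)
  obtain ⟨By, hABy, hByA₀, hBy⟩ := (hp.mem_symmDiff_iff hA).1 (hyA.2 trivial)
  have hX (A' : Finset α) (hA' : A' ∈ F) := hp.mem_symmDiff_iff_of_injOn hinj hA'
    (mem_erase.2 ⟨hBxA₀, hp.mem_of_reflTransGen hABx hA⟩) hBx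
  have hY (A' : Finset α) (hA' : A' ∈ F) := hp.mem_symmDiff_iff_of_injOn hinj hA'
    (mem_erase.2 ⟨hByA₀, hp.mem_of_reflTransGen hABy hA⟩) hBy
  rcases hABx.total_of_right_unique (fun _ _ _ h₁ h₂ => h₁.2.symm.trans h₂.2) hABy with h | h
  · obtain ⟨A', hA', hxA', hyA'⟩ := htrace True False
    exact hyA'.1 ((hY A' hA').2 (((hX A' hA').1 (hxA'.2 trivial)).trans h))
  · obtain ⟨A', hA', hxA', hyA'⟩ := htrace False True
    exact hxA'.1 ((hX A' hA').2 (((hY A' hA').1 (hyA'.2 trivial)).trans h))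

end IsParentMap

end

/-- A finite set system is well-graded with VC-dimension at most `1` iff it is
well-graded with additionality `1`, i.e. `|F| = |ess_F(X)| + 1`. -/
theorem wellGraded_vcDim_le_one_iff_additionality_one {α : Type*}
    [DecidableEq α] [Fintype α] (F : Finset (Finset α)) (hF : F.Nonempty) :
    (WellGraded F ∧ vcDim F ≤ 1) ↔
      (WellGraded F ∧ F.card = (essSet F).card + 1) := by
  obtain ⟨A₀, hA₀⟩ := hF
  refine and_congr_right fun hwg => ?_
  obtain ⟨p, hp⟩ := hwg.exists_isParentMap hA₀
  rw [hp.card_eq_card_essSet_add_one_iff hA₀]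
  exact ⟨hp.injOn_of_vcDim_le_one, hp.vcDim_le_one_of_injOn⟩
end

section
/- A finite set system (X, F) is well-graded with VC-dimension at most 1 if and only if its one-inclusion graph is a tree in which all edge labels are distinct, where the edge between A and A ∪ {b} is labelled b. -/
/-!
Along any walk in the one-inclusion graph, an element lies in the symmetric difference of the
endpoints iff it occurs an odd number of times among the labels crossed; so a walk from `A` to `B`
has length `#(A ∆ B)` exactly when its labels are distinct.

If every label is carried by at most one edge, a cycle would have to cross its first edge again,
so the graph is acyclic; and the labels along a path are distinct, so a tree is well-graded.
Conversely, VC-dimension at most `1` forces distinct labels, since two edges labelled `b` whose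
lower ends differ in `x` shatter `{x, b}`. Finally, if a well-graded family with distinct labels
shattered `{x, y}`, then geodesics between members with traces `∅`, `{x}` and between members with
traces `{y}`, `{x, y}` would each cross the unique `x`-edge, whose lower end would then have to
both avoid and contain `y`.
-/

namespace OneInclusion

open Finset SimpleGraph
open scoped symmDiff

variable {α : Type*} [DecidableEq α] {F : Finset (Finset α)}

-- `A` and `B` are the lower ends of two edges labelled `b`.
def HasDistinctLabels (F : Finset (Finset α)) : Prop :=
  ∀ b : α, ∀ A ∈ F, ∀ B ∈ F, b ∉ A → insert b A ∈ F → b ∉ B → insert b B ∈ F → A = B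

lemma symmDiff_singleton_of_notMem {s : Finset α} {b : α} (hb : b ∉ s) :
    s ∆ {b} = insert b s := by
  rw [symmDiff_eq_union (disjoint_singleton_right.mpr hb), union_comm, ← insert_eq]

section Edges

variable {A B : F} {b : α}

lemma symmDiff_eq_singleton_of_adj (h : (oneInclusion F).Adj A B) (hb : b ∈ A.1 ∆ B.1) :
    A.1 ∆ B.1 = {b} := by
  obtain ⟨a, ha⟩ := card_eq_one.mp h
  rw [ha] at hb ⊢
  rw [mem_singleton.mp hb]

lemma exists_lower_upper_of_adj (h : (oneInclusion F).Adj A B) (hb : b ∈ A.1 ∆ B.1) :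
    ∃ L H : F, s(A, B) = s(L, H) ∧ b ∉ L.1 ∧ H.1 = insert b L.1 := by
  have hAB := symmDiff_eq_singleton_of_adj h hb
  by_cases hbA : b ∈ A.1
  · have hbB : b ∉ B.1 := fun hbB => by simp [mem_symmDiff, hbA, hbB] at hb
    refine ⟨B, A, Sym2.eq_swap, hbB, ?_⟩
    rw [← symmDiff_singleton_of_notMem hbB, ← hAB, symmDiff_comm, symmDiff_symmDiff_cancel_right]
  · refine ⟨A, B, rfl, hbA, ?_⟩
    rw [← symmDiff_singleton_of_notMem hbA, ← hAB, symmDiff_symmDiff_cancel_left]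

lemma HasDistinctLabels.edge_eq_of_mem_symmDiff (hF : HasDistinctLabels F) {U V : F}
    (h : (oneInclusion F).Adj A B) (h' : (oneInclusion F).Adj U V)
    (hb : b ∈ A.1 ∆ B.1) (hb' : b ∈ U.1 ∆ V.1) : s(A, B) = s(U, V) := by
  obtain ⟨L, H, hAB, hL, hH⟩ := exists_lower_upper_of_adj h hb
  obtain ⟨L', H', hUV, hL', hH'⟩ := exists_lower_upper_of_adj h' hb'
  have hLL : L = L' := Subtype.ext (hF b _ L.2 _ L'.2 hL (hH ▸ H.2) hL' (hH' ▸ H'.2))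
  have hHH : H = H' := Subtype.ext (by rw [hH, hH', hLL])
  rw [hAB, hUV, hLL, hHH]

end Edges

def labels {A B : F} (w : (oneInclusion F).Walk A B) : Multiset α :=
  (w.darts : Multiset (oneInclusion F).Dart).bind fun d => (d.fst.1 ∆ d.snd.1).val

section Labels

variable {A B C : F}

@[simp] lemma labels_nil : labels (.nil : (oneInclusion F).Walk A A) = 0 := rfl

@[simp] lemma labels_cons (h : (oneInclusion F).Adj A B) (w : (oneInclusion F).Walk B C) :
    labels (.cons h w) = (A.1 ∆ B.1).val + labels w := by
  rw [labels, Walk.darts_cons, ← Multiset.cons_coe, Multiset.cons_bind, labels]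

lemma card_labels (w : (oneInclusion F).Walk A B) : Multiset.card (labels w) = w.length := by
  induction w with
  | nil => rfl
  | cons h w ih =>
    rename_i A B C
    simp only [labels_cons, Multiset.card_add, Finset.card_val, ih, Walk.length_cons]
    rw [show (A.1 ∆ B.1).card = 1 from h]; omega

lemma mem_labels {w : (oneInclusion F).Walk A B} {x : α} :
    x ∈ labels w ↔ ∃ d ∈ w.darts, x ∈ d.fst.1 ∆ d.snd.1 := by
  simp [labels, Multiset.mem_bind]

lemma mem_symmDiff_iff_odd_count_labels (w : (oneInclusion F).Walk A B) (x : α) :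
    x ∈ A.1 ∆ B.1 ↔ Odd ((labels w).count x) := by
  induction w with
  | nil => simp
  | cons h w ih =>
    rename_i A B C
    rw [labels_cons, Multiset.count_add, Multiset.count_eq_of_nodup (A.1 ∆ B.1).nodup]
    by_cases hx : x ∈ A.1 ∆ B.1
    · rw [if_pos (mem_val.mpr hx), add_comm, Nat.odd_add_one, ← ih]
      simp only [mem_symmDiff] at hx ⊢
      tauto
    · rw [if_neg (mt mem_val.mp hx), zero_add, ← ih]
      simp only [mem_symmDiff] at hx ⊢
      tauto

lemma mem_labels_of_mem_symmDiff (w : (oneInclusion F).Walk A B) {x : α}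
    (hx : x ∈ A.1 ∆ B.1) : x ∈ labels w :=
  Multiset.count_pos.mp ((mem_symmDiff_iff_odd_count_labels w x).mp hx).pos

lemma mem_symmDiff_of_mem_labels {w : (oneInclusion F).Walk A B} (hw : (labels w).Nodup)
    {x : α} (hx : x ∈ labels w) : x ∈ A.1 ∆ B.1 := by
  rw [mem_symmDiff_iff_odd_count_labels w, Multiset.count_eq_one_of_mem hw hx]
  exact odd_one

lemma length_eq_card_symmDiff_iff_nodup (w : (oneInclusion F).Walk A B) :
    w.length = #(A.1 ∆ B.1) ↔ (labels w).Nodup := by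
  have hsub : A.1 ∆ B.1 ⊆ (labels w).toFinset := fun x hx =>
    Multiset.mem_toFinset.mpr (mem_labels_of_mem_symmDiff w hx)
  rw [← card_labels w]
  constructor
  · intro h
    rw [← Multiset.toFinset_card_eq_card_iff_nodup]
    exact le_antisymm (Multiset.toFinset_card_le _) (h ▸ card_le_card hsub)
  · intro hw
    have hlabels : (labels w).toFinset = A.1 ∆ B.1 := Subset.antisymm
      (fun x hx => mem_symmDiff_of_mem_labels hw (Multiset.mem_toFinset.mp hx)) hsub
    rw [← hlabels, Multiset.toFinset_card_of_nodup hw]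

lemma mem_iff_of_notMem_labels {w : (oneInclusion F).Walk A B} {y : α} (hy : y ∉ labels w)
    {U : F} (hU : U ∈ w.support) : y ∈ U.1 ↔ y ∈ A.1 := by
  induction w with
  | nil => rw [List.mem_singleton.mp hU]
  | cons h w ih =>
    rename_i A B C
    rw [labels_cons, Multiset.mem_add, not_or] at hy
    rcases List.mem_cons.mp hU with rfl | hU
    · rfl
    · have hyAB := hy.1
      rw [ih hy.2 hU]
      simp only [mem_val, mem_symmDiff] at hyAB
      tauto

end Labels

lemma HasDistinctLabels.mem_edges_of_mem_labels (hF : HasDistinctLabels F) {A B U V : F} {b : α}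
    (h : (oneInclusion F).Adj A B) (hb : b ∈ A.1 ∆ B.1) {w : (oneInclusion F).Walk U V}
    (hw : b ∈ labels w) : s(A, B) ∈ w.edges := by
  obtain ⟨d, hd, hbd⟩ := mem_labels.mp hw
  rw [hF.edge_eq_of_mem_symmDiff h d.adj hb hbd, Walk.edges_eq_map_darts]
  exact List.mem_map_of_mem hd

lemma HasDistinctLabels.labels_nodup_of_isPath (hF : HasDistinctLabels F) {A B : F}
    {p : (oneInclusion F).Walk A B} (hp : p.IsPath) : (labels p).Nodup := by
  induction p with
  | nil => simp
  | cons h p ih =>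
    rename_i A B C
    obtain ⟨b, hb⟩ := card_eq_one.mp h
    rw [labels_cons, hb, singleton_val, Multiset.singleton_add, Multiset.nodup_cons]
    refine ⟨fun hbp => ?_, ih hp.of_cons⟩
    exact ((Walk.isTrail_cons h p).mp hp.isTrail).2
      (hF.mem_edges_of_mem_labels h (hb ▸ mem_singleton_self b) hbp)

theorem HasDistinctLabels.isAcyclic (hF : HasDistinctLabels F) : (oneInclusion F).IsAcyclic := by
  rintro v (_ | ⟨h, p⟩) hc
  · exact hc.ne_nil rfl
  · rename_i w
    obtain ⟨b, hb⟩ := card_eq_one.mp h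
    have hbv : b ∈ v.1 ∆ w.1 := hb ▸ mem_singleton_self b
    have hbp : b ∈ labels p := mem_labels_of_mem_symmDiff p (by rwa [symmDiff_comm])
    exact ((Walk.isTrail_cons h p).mp hc.isTrail).2 (hF.mem_edges_of_mem_labels h hbv hbp)

theorem HasDistinctLabels.wellGraded_of_isTree (hF : HasDistinctLabels F)
    (hT : (oneInclusion F).IsTree) : WellGraded F := by
  intro A B
  obtain ⟨p, hp, hlen⟩ := hT.connected.exists_path_of_dist A B
  rw [← hlen]
  exact (length_eq_card_symmDiff_iff_nodup p).mpr (hF.labels_nodup_of_isPath hp)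

theorem connected_of_wellGraded (hwg : WellGraded F) (hne : F.Nonempty) :
    (oneInclusion F).Connected := by
  rw [connected_iff]
  refine ⟨fun A B => ?_, let ⟨A, hA⟩ := hne; ⟨⟨A, hA⟩⟩⟩
  by_cases hAB : A = B
  · exact hAB ▸ Reachable.refl A
  · apply Reachable.of_dist_ne_zero
    rw [hwg, card_ne_zero, symmDiff_nonempty]
    exact fun h => hAB (Subtype.ext h)

lemma exists_edge_of_wellGraded (hwg : WellGraded F) {A B : F} {x : α}
    (hx : x ∈ A.1 ∆ B.1) :
    ∃ C ∈ F, x ∉ C ∧ insert x C ∈ F ∧ ∀ y ∉ A.1 ∆ B.1, (y ∈ C ↔ y ∈ A.1) := by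
  have hdist : (oneInclusion F).dist A B ≠ 0 := by
    rw [hwg]
    exact (card_pos.mpr ⟨x, hx⟩).ne'
  obtain ⟨w, hw⟩ := exists_walk_of_dist_ne_zero hdist
  rw [hwg] at hw
  have hnd := (length_eq_card_symmDiff_iff_nodup w).mp hw
  obtain ⟨d, hd, hxd⟩ := mem_labels.mp (mem_labels_of_mem_symmDiff w hx)
  obtain ⟨L, H, hLH, hxL, hH⟩ := exists_lower_upper_of_adj d.adj hxd
  have hL : L ∈ w.support := by
    rcases Sym2.mem_iff.mp (hLH ▸ Sym2.mem_mk_left L H : L ∈ s(d.fst, d.snd)) with rfl | rfl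
    · exact w.dart_fst_mem_support_of_mem_darts hd
    · exact w.dart_snd_mem_support_of_mem_darts hd
  refine ⟨L.1, L.2, hxL, hH ▸ H.2, fun y hy => ?_⟩
  exact mem_iff_of_notMem_labels (fun hyw => hy (mem_symmDiff_of_mem_labels hnd hyw)) hL

theorem vcDim_le_one_of_wellGraded (hwg : WellGraded F) (hF : HasDistinctLabels F) :
    F.vcDim ≤ 1 := by
  refine Finset.sup_le fun s hs => card_le_one.mpr fun x hx y hy => by_contra fun hxy => ?_
  have witness : ∀ t ⊆ s, ∃ u : F, ∀ z ∈ s, z ∈ u.1 ↔ z ∈ t :=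
    fun t ht => let ⟨u, hu, hut⟩ := mem_shatterer.mp hs ht
      ⟨⟨u, hu⟩, fun z hz => by rw [← hut, mem_inter, and_iff_right hz]⟩
  obtain ⟨P, hP⟩ := witness ∅ (empty_subset s)
  obtain ⟨Px, hPx⟩ := witness {x} (singleton_subset_iff.mpr hx)
  obtain ⟨Py, hPy⟩ := witness {y} (singleton_subset_iff.mpr hy)
  obtain ⟨Pxy, hPxy⟩ := witness s subset_rfl
  obtain ⟨C, hC, hxC, hCx, hyC⟩ := exists_edge_of_wellGraded hwg (A := P) (B := Px) (x := x)
    (by simp [mem_symmDiff, hP x hx, hPx x hx])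
  obtain ⟨C', hC', hxC', hC'x, hyC'⟩ :=
    exists_edge_of_wellGraded hwg (A := Py) (B := Pxy) (x := x)
      (by simp [mem_symmDiff, hPy x hx, hPxy x hx, hxy, hx])
  obtain rfl := hF x C hC C' hC' hxC hCx hxC' hC'x
  have hyC₀ : y ∈ C ↔ y ∈ (∅ : Finset α) :=
    (hyC y (by simp [mem_symmDiff, hP y hy, hPx y hy, Ne.symm hxy])).trans (hP y hy)
  have hyC₁ : y ∈ C ↔ y ∈ ({y} : Finset α) :=
    (hyC' y (by simp [mem_symmDiff, hPy y hy, hPxy y hy, hy])).trans (hPy y hy)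
  exact notMem_empty y (hyC₀.mp (hyC₁.mpr (mem_singleton_self y)))

lemma shatters_pair_of_insert_mem {A B : Finset α} {x b : α} (hA : A ∈ F) (hB : B ∈ F)
    (hAb : insert b A ∈ F) (hBb : insert b B ∈ F) (hbA : b ∉ A) (hbB : b ∉ B)
    (hxA : x ∈ A) (hxB : x ∉ B) : F.Shatters {x, b} := by
  intro t ht
  have ht' : ∀ z ∈ t, z = x ∨ z = b := fun z hz => by simpa using ht hz
  refine ⟨if x ∈ t then (if b ∈ t then insert b A else A) else (if b ∈ t then insert b B else B),
    by split_ifs <;> assumption, ?_⟩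
  ext z
  by_cases hzt : z ∈ t
  · rcases ht' z hzt with rfl | rfl <;> split_ifs <;> simp_all
  · by_cases hzx : z = x <;> by_cases hzb : z = b <;> subst_vars <;> split_ifs <;> simp_all

theorem hasDistinctLabels_of_vcDim_le_one (hvc : F.vcDim ≤ 1) : HasDistinctLabels F := by
  intro b A hA B hB hbA hAb hbB hBb
  by_contra hAB
  obtain ⟨x, hx⟩ := symmDiff_nonempty.mpr hAB
  have hxb : x ≠ b := by
    rintro rfl
    rcases mem_symmDiff.mp hx with h | h
    exacts [hbA h.1, hbB h.1]
  have hshatters : F.Shatters {x, b} := by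
    rcases mem_symmDiff.mp hx with ⟨hxA, hxB⟩ | ⟨hxB, hxA⟩
    · exact shatters_pair_of_insert_mem hA hB hAb hBb hbA hbB hxA hxB
    · exact shatters_pair_of_insert_mem hB hA hBb hAb hbB hbA hxB hxA
  have := hshatters.card_le_vcDim.trans hvc
  rw [card_pair hxb] at this
  omega

end OneInclusion

/-- A finite set system is well-graded with VC-dimension at most `1` iff its
one-inclusion graph is a tree all of whose edge labels are distinct (the edge
between `A` and `A ∪ {b}` being labelled `b`; distinctness of labels says that
for each label `b` there is at most one edge labelled `b`). -/
theorem wellGraded_vcDim_le_one_iff_tree_distinct_labels {α : Type*}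
    [DecidableEq α] (F : Finset (Finset α)) (hF : F.Nonempty) :
    (WellGraded F ∧ vcDim F ≤ 1) ↔
      ((oneInclusion F).IsTree ∧
        ∀ b : α, ∀ A ∈ F, ∀ B ∈ F,
          b ∉ A → insert b A ∈ F → b ∉ B → insert b B ∈ F → A = B) := by
  constructor
  · rintro ⟨hwg, hvc⟩
    have hdl := OneInclusion.hasDistinctLabels_of_vcDim_le_one hvc
    exact ⟨⟨OneInclusion.connected_of_wellGraded hwg hF, hdl.isAcyclic⟩, hdl⟩
  · rintro ⟨hT, hdl : OneInclusion.HasDistinctLabels F⟩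
    have hwg := hdl.wellGraded_of_isTree hT
    exact ⟨hwg, OneInclusion.vcDim_le_one_of_wellGraded hwg hdl⟩
end

section
/- If a finite set system has VC-dimension at most 1, then its additionality |F| − |ess_F(X)| is at most 1. -/
/-- If a finite set system has VC-dimension at most `1`, then its additionality
`|F| − |ess_F(X)|` is at most `1`. -/
theorem additionality_le_one_of_vcDim_le_one {α : Type*} [DecidableEq α]
    [Fintype α] (F : Finset (Finset α)) (hF : F.Nonempty)
    (h : vcDim F ≤ 1) : F.card ≤ (essSet F).card + 1 := by
  classical
  set ess := essSet F with hess
  set F' := F.image (fun A => A ∩ ess) with hF'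
  -- |F| = |F'|
  have hcard : F.card = F'.card := by
    rw [hF', Finset.card_image_of_injOn]
    intro A hA B hB hAB
    ext x
    by_cases hx : x ∈ ess
    · have := Finset.ext_iff.1 hAB x
      simpa [hx] using this
    · simp only [hess, essSet, Finset.mem_filter, Finset.mem_univ, true_and,
        not_and_or, not_exists] at hx
      rcases hx with hx | hx
      · have hxa := (hx A).resolve_left (not_not_intro hA)
        have hxb := (hx B).resolve_left (not_not_intro hB)
        simp [hxa, hxb]
      · have hxa := (hx A).resolve_left (not_not_intro hA)
        have hxb := (hx B).resolve_left (not_not_intro hB)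
        exact iff_of_true (not_not.mp hxa) (not_not.mp hxb)
  -- Sauer–Shelah
  have h1 : F'.card ≤ F'.shatterer.card := Finset.card_le_card_shatterer F'
  -- shatterer of F' ⊆ insert ∅ (ess.image singleton)
  have h2 : F'.shatterer ⊆ insert ∅ (ess.image fun x => {x}) := by
    intro s hs
    rw [Finset.mem_shatterer] at hs
    have hsub : s ⊆ ess := by
      obtain ⟨u, hu, hsu⟩ := hs (Finset.Subset.refl s)
      have h1 : s ⊆ u := Finset.inter_eq_left.mp hsu
      obtain ⟨A, hA, rfl⟩ := Finset.mem_image.mp hu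
      exact h1.trans Finset.inter_subset_right
    have hshat : F.Shatters s := by
      intro t ht
      obtain ⟨u, hu, hsu⟩ := hs ht
      obtain ⟨A, hA, rfl⟩ := Finset.mem_image.mp hu
      refine ⟨A, hA, ?_⟩
      rw [← hsu]
      rw [← Finset.inter_assoc, Finset.inter_comm s A, Finset.inter_assoc,
        Finset.inter_eq_left.mpr hsub, Finset.inter_comm]
    have hc : s.card ≤ 1 :=
      le_trans (Finset.le_sup (Finset.mem_shatterer.mpr hshat)) h
    interval_cases hsc : s.card
    · simp [Finset.card_eq_zero.mp hsc]
    · obtain ⟨x, rfl⟩ := Finset.card_eq_one.mp hsc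
      have : x ∈ ess := hsub (Finset.mem_singleton_self x)
      exact Finset.mem_insert_of_mem (Finset.mem_image_of_mem _ this)
  calc F.card = F'.card := hcard
    _ ≤ F'.shatterer.card := h1
    _ ≤ (insert ∅ (ess.image fun x => ({x} : Finset α))).card :=
        Finset.card_le_card h2
    _ ≤ (ess.image fun x => ({x} : Finset α)).card + 1 :=
        Finset.card_insert_le _ _
    _ ≤ ess.card + 1 := by
        exact Nat.add_le_add_right (Finset.card_image_le) 1
end
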